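/- Let T ∈ (0,∞] and let p : ℝ × [0,T) → ℝ be smooth, 2π-periodic in θ, with L(t) = ∫₀^{2π} p(θ,t) dθ > 0 for all t, solving the area-preserving inverse curvature flow ∂p/∂t = ∂²p/∂θ² + p − (1/L(t))∫₀^{2π} β(θ,t)² dθ, where β = p + ∂²p/∂θ². Then the algebraic area A(t) = (1/2)∫₀^{2π} p(θ,t)β(θ,t) dθ is constant in t, and the algebraic length L(t) is non-increasing in t. -/

import Mathlib

open Real Filter
open scoped ENNReal

/-- The curvature quantity `β = p + p''` of an ℓ-convex Legendre curve (ℓ = 1)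
with support function `p`. -/
noncomputable def betaF (p : ℝ → ℝ) : ℝ → ℝ := fun θ => p θ + iteratedDeriv 2 p θ

/-- The algebraic length `L = ∫₀^{2π} p`. -/
noncomputable def algLen (p : ℝ → ℝ) : ℝ := ∫ θ in (0:ℝ)..(2 * π), p θ

/-- The algebraic area `A = (1/2) ∫₀^{2π} p β`. -/
noncomputable def algArea (p : ℝ → ℝ) : ℝ :=
  (1 / 2) * ∫ θ in (0:ℝ)..(2 * π), p θ * betaF p θ

/-- The time interval `[0, T)` for `T ∈ (0, ∞]`, as a subset of ℝ. -/
def timeDom (T : ℝ≥0∞) : Set ℝ := {t : ℝ | 0 ≤ t ∧ ENNReal.ofReal t < T}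

/-!
Write `q = ∂ₜp`, so that the flow equation says `q = β - λ` with `λ = (1/L) ∫ β²`.
Since `∫ p'' = 0` we have `L = ∫ β`, hence `dL/dt = ∫ q = L - 2πλ`, which is `≤ 0` because
Cauchy–Schwarz gives `L² = (∫ β)² ≤ 2π ∫ β²`. Integrating by parts, `2A = ∫ (p² - p'²)`, and,
using `∂ₜ p' = (∂ₜ p)'`, `dA/dt = ∫ (p q - p' q') = ∫ q β = ∫ β² - λ L = 0`.

The time derivatives are never taken under the integral sign: the fundamental theorem of calculus
is applied in `t` for each fixed `θ`, and the two integrations are then swapped.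
-/

open MeasureTheory Set Function

namespace Function.Periodic

variable {f g : ℝ → ℝ} {c : ℝ}

theorem deriv (hf : Periodic f c) : Periodic (_root_.deriv f) c := fun x => by
  rw [← deriv_comp_add_const, show (fun y => f (y + c)) = f from funext hf]

theorem intervalIntegral_deriv_eq_zero (hf : Periodic f c) (hd : Differentiable ℝ f)
    (hint : IntervalIntegrable (_root_.deriv f) volume 0 c) :
    ∫ x in (0:ℝ)..c, _root_.deriv f x = 0 := by
  rw [intervalIntegral.integral_deriv_eq_sub (fun x _ => hd x) hint, ← zero_add c, hf 0, sub_self]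

theorem intervalIntegral_mul_deriv_eq_neg (hf : Periodic f c) (hg : Periodic g c)
    (hf₁ : ContDiff ℝ 1 f) (hg₁ : ContDiff ℝ 1 g) :
    ∫ x in (0:ℝ)..c, f x * _root_.deriv g x = -∫ x in (0:ℝ)..c, _root_.deriv f x * g x := by
  rw [intervalIntegral.integral_mul_deriv_eq_deriv_mul
    (fun x _ => (hf₁.differentiable one_ne_zero x).hasDerivAt)
    (fun x _ => (hg₁.differentiable one_ne_zero x).hasDerivAt)
    ((hf₁.continuous_deriv le_rfl).intervalIntegrable _ _)
    ((hg₁.continuous_deriv le_rfl).intervalIntegrable _ _), ← zero_add c, hf 0, hg 0]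
  ring

end Function.Periodic

theorem sq_intervalIntegral_le {f : ℝ → ℝ} {a b : ℝ} (hab : a ≤ b)
    (hf : IntervalIntegrable f volume a b)
    (hf₂ : IntervalIntegrable (fun x => f x ^ 2) volume a b) :
    (∫ x in a..b, f x) ^ 2 ≤ (b - a) * ∫ x in a..b, f x ^ 2 := by
  rcases hab.eq_or_lt with rfl | hab
  · simp
  set I := ∫ x in a..b, f x with hI
  have hsq : 0 ≤ ∫ x in a..b, ((b - a) * f x - I) ^ 2 :=
    intervalIntegral.integral_nonneg hab.le fun x _ => sq_nonneg _
  have hexpand : ∫ x in a..b, ((b - a) * f x - I) ^ 2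
      = (b - a) * ((b - a) * (∫ x in a..b, f x ^ 2) - I ^ 2) := by
    have h : ∀ x, ((b - a) * f x - I) ^ 2
        = ((b - a) ^ 2 * f x ^ 2 - 2 * (b - a) * I * f x) + I ^ 2 := fun x => by ring
    simp_rw [h]
    rw [intervalIntegral.integral_add ((hf₂.const_mul _).sub (hf.const_mul _))
        intervalIntegrable_const, intervalIntegral.integral_sub (hf₂.const_mul _) (hf.const_mul _),
      intervalIntegral.integral_const_mul, intervalIntegral.integral_const_mul,
      intervalIntegral.integral_const, smul_eq_mul, ← hI]
    ring
  rw [hexpand, mul_nonneg_iff_of_pos_left (sub_pos.2 hab)] at hsq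
  linarith

section PartialDerivatives

theorem fderivWithin_fderivWithin_apply_comm {E F : Type*} [NormedAddCommGroup E]
    [NormedSpace ℝ E] [NormedAddCommGroup F] [NormedSpace ℝ F] {f : E → F} {s : Set E} {x : E}
    (hs : UniqueDiffOn ℝ s) (hf : ContDiffOn ℝ 2 f s) (hx : x ∈ s)
    (hx' : x ∈ closure (interior s)) (v w : E) :
    fderivWithin ℝ (fun y => fderivWithin ℝ f s y v) s x w
      = fderivWithin ℝ (fun y => fderivWithin ℝ f s y w) s x v := by
  have hdiff : DifferentiableWithinAt ℝ (fderivWithin ℝ f s) s x :=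
    (hf.fderivWithin hs (by norm_num)).differentiableOn one_ne_zero x hx
  have happly : ∀ v, fderivWithin ℝ (fun y => fderivWithin ℝ f s y v) s x
      = (fderivWithin ℝ (fderivWithin ℝ f s) s x).flip v := fun v => by
    rw [fderivWithin_clm_apply (hs x hx) hdiff (differentiableWithinAt_const v),
      fderivWithin_const_apply, ContinuousLinearMap.comp_zero, zero_add]
  rw [happly, happly]
  exact (hf x hx).isSymmSndFDerivWithinAt (by norm_num) hs hx' hx w v

variable {E : Type*} [NormedAddCommGroup E] [NormedSpace ℝ E] {S : Set ℝ} {g : ℝ × ℝ → E}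
  {t θ : ℝ}

theorem DifferentiableWithinAt.hasDerivWithinAt_fst_slice
    (hg : DifferentiableWithinAt ℝ g (S ×ˢ univ) (t, θ)) :
    HasDerivWithinAt (fun s => g (s, θ)) (fderivWithin ℝ g (S ×ˢ univ) (t, θ) (1, 0)) S t :=
  hg.hasFDerivWithinAt.comp_hasDerivWithinAt t
    ((hasDerivWithinAt_id t S).prodMk (hasDerivWithinAt_const t S θ))
    fun _ hs => mk_mem_prod hs (mem_univ θ)

theorem DifferentiableWithinAt.hasDerivAt_snd_slice
    (hg : DifferentiableWithinAt ℝ g (S ×ˢ univ) (t, θ)) (ht : t ∈ S) :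
    HasDerivAt (fun φ => g (t, φ)) (fderivWithin ℝ g (S ×ˢ univ) (t, θ) (0, 1)) θ := by
  rw [← hasDerivWithinAt_univ]
  exact hg.hasFDerivWithinAt.comp_hasDerivWithinAt θ
    ((hasDerivWithinAt_const θ univ t).prodMk (hasDerivWithinAt_id θ univ))
    fun _ _ => mk_mem_prod ht (mem_univ _)

variable {p : ℝ → ℝ → ℝ}

theorem derivWithin_fst_eq_fderivWithin (hS : UniqueDiffOn ℝ S)
    (hp : DifferentiableOn ℝ (uncurry p) (S ×ˢ univ)) (ht : t ∈ S) :
    derivWithin (fun s => p s θ) S t = fderivWithin ℝ (uncurry p) (S ×ˢ univ) (t, θ) (1, 0) :=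
  ((hp _ ⟨ht, mem_univ θ⟩).hasDerivWithinAt_fst_slice).derivWithin (hS t ht)

theorem deriv_snd_eq_fderivWithin (hp : DifferentiableOn ℝ (uncurry p) (S ×ˢ univ))
    (ht : t ∈ S) : deriv (p t) θ = fderivWithin ℝ (uncurry p) (S ×ˢ univ) (t, θ) (0, 1) :=
  ((hp _ ⟨ht, mem_univ θ⟩).hasDerivAt_snd_slice ht).deriv

theorem hasDerivWithinAt_derivWithin_fst (hp : DifferentiableOn ℝ (uncurry p) (S ×ˢ univ))
    (ht : t ∈ S) : HasDerivWithinAt (fun s => p s θ) (derivWithin (fun s => p s θ) S t) S t :=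
  (hp _ (mk_mem_prod ht (mem_univ θ))).hasDerivWithinAt_fst_slice.differentiableWithinAt
    |>.hasDerivWithinAt

theorem contDiff_apply_of_contDiffOn_uncurry {n : WithTop ℕ∞}
    (hp : ContDiffOn ℝ n (uncurry p) (S ×ˢ univ)) (ht : t ∈ S) : ContDiff ℝ n (p t) :=
  contDiffOn_univ.1 <|
    hp.comp (contDiffOn_const.prodMk contDiffOn_id) fun θ _ => mk_mem_prod ht (mem_univ θ)

variable {n : WithTop ℕ∞}

theorem contDiffOn_uncurry_derivWithin_fst (hS : UniqueDiffOn ℝ S)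
    (hp : ContDiffOn ℝ (n + 1) (uncurry p) (S ×ˢ univ)) :
    ContDiffOn ℝ n (uncurry fun t θ => derivWithin (fun s => p s θ) S t) (S ×ˢ univ) :=
  ((hp.fderivWithin (hS.prod uniqueDiffOn_univ) le_rfl).clm_apply contDiffOn_const).congr
    fun x hx => derivWithin_fst_eq_fderivWithin hS
      (hp.differentiableOn (by simp)) hx.1

theorem contDiffOn_uncurry_deriv_snd (hS : UniqueDiffOn ℝ S)
    (hp : ContDiffOn ℝ (n + 1) (uncurry p) (S ×ˢ univ)) :
    ContDiffOn ℝ n (uncurry fun t θ => deriv (p t) θ) (S ×ˢ univ) :=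
  ((hp.fderivWithin (hS.prod uniqueDiffOn_univ) le_rfl).clm_apply contDiffOn_const).congr
    fun x hx => deriv_snd_eq_fderivWithin (hp.differentiableOn (by simp)) hx.1

theorem hasDerivWithinAt_deriv_snd (hS : UniqueDiffOn ℝ S)
    (hp : ContDiffOn ℝ 2 (uncurry p) (S ×ˢ univ)) (ht : t ∈ S)
    (ht' : t ∈ closure (interior S)) :
    HasDerivWithinAt (fun s => deriv (p s) θ)
      (deriv (fun φ => derivWithin (fun s => p s φ) S t) θ) S t := by
  have hΩ : UniqueDiffOn ℝ (S ×ˢ (univ : Set ℝ)) := hS.prod uniqueDiffOn_univ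
  have hpd : DifferentiableOn ℝ (uncurry p) (S ×ˢ univ) := hp.differentiableOn (by norm_num)
  have hmem : (t, θ) ∈ S ×ˢ (univ : Set ℝ) := ⟨ht, mem_univ θ⟩
  have hmem' : (t, θ) ∈ closure (interior (S ×ˢ (univ : Set ℝ))) := by
    rw [interior_prod_eq, interior_univ, closure_prod_eq, closure_univ]
    exact ⟨ht', mem_univ θ⟩
  have hpartial : ∀ v : ℝ × ℝ, DifferentiableWithinAt ℝ
      (fun x => fderivWithin ℝ (uncurry p) (S ×ˢ univ) x v) (S ×ˢ univ) (t, θ) := fun v =>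
    ((hp.fderivWithin hΩ (by norm_num)).clm_apply (contDiffOn_const (c := v))).differentiableOn
      one_ne_zero _ hmem
  have hmixed := (hpartial (0, 1)).hasDerivWithinAt_fst_slice
  rw [fderivWithin_fderivWithin_apply_comm hΩ hp hmem hmem'] at hmixed
  have hfst : (fun φ => derivWithin (fun s => p s φ) S t)
      = fun φ => fderivWithin ℝ (uncurry p) (S ×ˢ univ) (t, φ) (1, 0) :=
    funext fun φ => derivWithin_fst_eq_fderivWithin hS hpd ht
  rw [hfst, ((hpartial (1, 0)).hasDerivAt_snd_slice ht).deriv]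
  exact hmixed.congr_of_mem (fun s hs => deriv_snd_eq_fderivWithin hpd hs) ht

end PartialDerivatives

section TimeIntegration

variable {S : Set ℝ} {G W : ℝ → ℝ → ℝ} {a b : ℝ}

theorem integral_eq_sub_of_hasDerivWithinAt_of_ordConnected {g g' : ℝ → ℝ} {t₀ t₁ : ℝ}
    (hS : S.OrdConnected) (ht₀ : t₀ ∈ S) (ht₁ : t₁ ∈ S) (ht : t₀ ≤ t₁)
    (hg : ∀ u ∈ S, HasDerivWithinAt g (g' u) S u) (hg' : ContinuousOn g' (Icc t₀ t₁)) :
    ∫ u in t₀..t₁, g' u = g t₁ - g t₀ := by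
  have hsub : Icc t₀ t₁ ⊆ S := hS.out ht₀ ht₁
  refine intervalIntegral.integral_eq_sub_of_hasDeriv_right_of_le ht
    (fun u hu => (hg u (hsub hu)).continuousWithinAt.mono hsub) (fun u hu => ?_)
    (hg'.intervalIntegrable_of_Icc ht)
  refine (hg u (hsub (Ioo_subset_Icc_self hu))).mono_of_mem_nhdsWithin ?_
  exact mem_of_superset (Ico_mem_nhdsGT hu.2) fun v hv => hsub ⟨hu.1.le.trans hv.1, hv.2.le⟩

variable (hS : S.OrdConnected) (hG : ∀ u ∈ S, ∀ θ, HasDerivWithinAt (G · θ) (W u θ) S u)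
  (hW : ContinuousOn (uncurry W) (S ×ˢ univ))
include hS hG hW

theorem integral_sub_integral_eq_integral_integral {t₀ t₁ : ℝ} (ht₀ : t₀ ∈ S)
    (ht₁ : t₁ ∈ S) (ht : t₀ ≤ t₁) (hG₀ : IntervalIntegrable (G t₀) volume a b)
    (hG₁ : IntervalIntegrable (G t₁) volume a b) :
    (∫ θ in a..b, G t₁ θ) - ∫ θ in a..b, G t₀ θ
      = ∫ u in t₀..t₁, ∫ θ in a..b, W u θ := by
  have hsub : Icc t₀ t₁ ×ˢ uIcc a b ⊆ S ×ˢ univ :=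
    prod_mono (hS.out ht₀ ht₁) (subset_univ _)
  have hint : IntegrableOn (uncurry W) (uIoc t₀ t₁ ×ˢ uIoc a b) := by
    rw [uIoc_of_le ht]
    exact ((hW.mono hsub).integrableOn_compact (isCompact_Icc.prod isCompact_uIcc)).mono_set
      (prod_mono Ioc_subset_Icc_self uIoc_subset_uIcc)
  rw [← intervalIntegral.integral_sub hG₁ hG₀, intervalIntegral_intervalIntegral_swap hint]
  refine intervalIntegral.integral_congr fun θ _ => ?_
  refine (integral_eq_sub_of_hasDerivWithinAt_of_ordConnected hS ht₀ ht₁ ht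
    (fun u hu => hG u hu θ) ?_).symm
  exact hW.comp (continuous_id.prodMk continuous_const).continuousOn
    fun u hu => ⟨hS.out ht₀ ht₁ hu, mem_univ θ⟩

theorem antitoneOn_integral_of_hasDerivWithinAt
    (hGi : ∀ t ∈ S, IntervalIntegrable (G t) volume a b)
    (hW₀ : ∀ u ∈ S, ∫ θ in a..b, W u θ ≤ 0) :
    AntitoneOn (fun t => ∫ θ in a..b, G t θ) S := by
  intro s hs t ht hst
  have hdiff := integral_sub_integral_eq_integral_integral hS hG hW hs ht hst (hGi s hs) (hGi t ht)
  have hneg : 0 ≤ ∫ u in s..t, -∫ θ in a..b, W u θ :=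
    intervalIntegral.integral_nonneg hst fun u hu => neg_nonneg.2 (hW₀ u (hS.out hs ht hu))
  rw [intervalIntegral.integral_neg] at hneg
  simp only
  linarith

theorem integral_eq_of_hasDerivWithinAt
    (hGi : ∀ t ∈ S, IntervalIntegrable (G t) volume a b)
    (hW₀ : ∀ u ∈ S, ∫ θ in a..b, W u θ = 0) :
    ∀ s ∈ S, ∀ t ∈ S, ∫ θ in a..b, G s θ = ∫ θ in a..b, G t θ := by
  suffices h : ∀ s ∈ S, ∀ t ∈ S, s ≤ t → ∫ θ in a..b, G s θ = ∫ θ in a..b, G t θ by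
    intro s hs t ht
    rcases le_total s t with hst | hts
    exacts [h s hs t ht hst, (h t ht s hs hts).symm]
  intro s hs t ht hst
  have hdiff := integral_sub_integral_eq_integral_integral hS hG hW hs ht hst (hGi s hs) (hGi t ht)
  rw [intervalIntegral.integral_congr (g := fun _ => 0) fun u hu =>
    hW₀ u (hS.out hs ht (by rwa [uIcc_of_le hst] at hu)), intervalIntegral.integral_zero] at hdiff
  linarith

end TimeIntegration

section SupportFunction

variable {f q : ℝ → ℝ}

theorem betaF_apply (f : ℝ → ℝ) (θ : ℝ) : betaF f θ = f θ + deriv (deriv f) θ := by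
  simp [betaF, iteratedDeriv_eq_iterate]

theorem continuous_betaF (hf : ContDiff ℝ 2 f) : Continuous (betaF f) :=
  hf.continuous.add (hf.continuous_iteratedDeriv 2 le_rfl)

variable (hf : ContDiff ℝ 2 f) (hper : Periodic f (2 * π))
include hf hper

theorem integral_betaF_eq_algLen : ∫ θ in (0:ℝ)..(2 * π), betaF f θ = algLen f := by
  have hf' : ContDiff ℝ 1 (deriv f) := hf.deriv'
  simp_rw [betaF_apply]
  rw [intervalIntegral.integral_add (hf.continuous.intervalIntegrable _ _)
    ((hf'.continuous_deriv le_rfl).intervalIntegrable _ _),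
    hper.deriv.intervalIntegral_deriv_eq_zero (hf'.differentiable one_ne_zero)
      ((hf'.continuous_deriv le_rfl).intervalIntegrable _ _), add_zero, algLen]

theorem two_mul_algArea_eq :
    2 * algArea f = ∫ θ in (0:ℝ)..(2 * π), (f θ ^ 2 - deriv f θ ^ 2) := by
  have hf' : ContDiff ℝ 1 (deriv f) := hf.deriv'
  have hibp := hper.intervalIntegral_mul_deriv_eq_neg hper.deriv (hf.of_le one_le_two) hf'
  simp_rw [algArea, betaF_apply, mul_add]
  rw [intervalIntegral.integral_add ((hf.continuous.fun_mul hf.continuous).intervalIntegrable _ _)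
    ((hf.continuous.fun_mul (hf'.continuous_deriv le_rfl)).intervalIntegrable _ _), hibp,
    intervalIntegral.integral_sub ((hf.continuous.fun_pow 2).intervalIntegrable _ _)
      (((hf.continuous_deriv one_le_two).fun_pow 2).intervalIntegrable _ _)]
  simp only [sq]
  ring

theorem integral_mul_sub_deriv_mul_deriv_eq (hq : ContDiff ℝ 1 q)
    (hqper : Periodic q (2 * π)) :
    ∫ θ in (0:ℝ)..(2 * π), (f θ * q θ - deriv f θ * deriv q θ)
      = ∫ θ in (0:ℝ)..(2 * π), q θ * betaF f θ := by
  have hf' : ContDiff ℝ 1 (deriv f) := hf.deriv'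
  have hibp := hper.deriv.intervalIntegral_mul_deriv_eq_neg hqper hf' hq
  simp_rw [betaF_apply, mul_add]
  rw [intervalIntegral.integral_sub ((hf.continuous.fun_mul hq.continuous).intervalIntegrable _ _)
      (((hf.continuous_deriv one_le_two).fun_mul
        (hq.continuous_deriv le_rfl)).intervalIntegrable _ _),
    intervalIntegral.integral_add ((hq.continuous.fun_mul hf.continuous).intervalIntegrable _ _)
      ((hq.continuous.fun_mul (hf'.continuous_deriv le_rfl)).intervalIntegrable _ _), hibp]
  simp only [mul_comm (q _)]
  ring

end SupportFunction

/-- The right-hand side `β - λ` of the flow equation, written exactly as in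
`area_const_length_decreasing` so that the flow equation there reads `∂ₜp = flowVelocity p` by
unfolding. -/
noncomputable def flowVelocity (f : ℝ → ℝ) (θ : ℝ) : ℝ :=
  iteratedDeriv 2 f θ + f θ - (1 / algLen f) * ∫ x in (0:ℝ)..(2 * π), (betaF f x) ^ 2

section FlowVelocity

variable {f : ℝ → ℝ}

theorem flowVelocity_apply (f : ℝ → ℝ) (θ : ℝ) :
    flowVelocity f θ = betaF f θ - (∫ x in (0:ℝ)..(2 * π), (betaF f x) ^ 2) / algLen f := by
  rw [flowVelocity, betaF]
  ring

variable (hf : ContDiff ℝ 2 f) (hper : Periodic f (2 * π))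
include hf hper

theorem integral_flowVelocity_nonpos (hL : 0 < algLen f) :
    ∫ θ in (0:ℝ)..(2 * π), flowVelocity f θ ≤ 0 := by
  have hβ := continuous_betaF hf
  have hCS := sq_intervalIntegral_le Real.two_pi_pos.le (hβ.intervalIntegrable _ _)
    ((hβ.fun_pow 2).intervalIntegrable _ _)
  rw [integral_betaF_eq_algLen hf hper, sub_zero] at hCS
  simp_rw [flowVelocity_apply]
  rw [intervalIntegral.integral_sub (hβ.intervalIntegrable _ _) intervalIntegrable_const,
    integral_betaF_eq_algLen hf hper, intervalIntegral.integral_const, smul_eq_mul, sub_zero,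
    sub_nonpos, mul_div_assoc', le_div_iff₀ hL]
  nlinarith

theorem integral_flowVelocity_mul_betaF (hL : algLen f ≠ 0) :
    ∫ θ in (0:ℝ)..(2 * π), flowVelocity f θ * betaF f θ = 0 := by
  have hβ := continuous_betaF hf
  simp_rw [flowVelocity_apply, sub_mul]
  rw [intervalIntegral.integral_sub ((hβ.fun_mul hβ).intervalIntegrable _ _)
    ((hβ.intervalIntegrable _ _).const_mul _), intervalIntegral.integral_const_mul,
    integral_betaF_eq_algLen hf hper, div_mul_cancel₀ _ hL]
  simp only [sq, sub_self]

end FlowVelocity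

section Flow

variable {S : Set ℝ} {p : ℝ → ℝ → ℝ}
  (hS : Convex ℝ S) (hS' : (interior S).Nonempty)
  (hp : ContDiffOn ℝ 2 (uncurry p) (S ×ˢ univ))
  (hper : ∀ t ∈ S, Periodic (p t) (2 * π))
  (hpde : ∀ t ∈ S, ∀ θ, derivWithin (fun s => p s θ) S t = flowVelocity (p t) θ)
include hS hS' hp hper hpde

theorem antitoneOn_algLen_of_flow (hL : ∀ t ∈ S, 0 < algLen (p t)) :
    AntitoneOn (fun t => algLen (p t)) S := by
  have hU : UniqueDiffOn ℝ S := uniqueDiffOn_convex hS hS'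
  refine antitoneOn_integral_of_hasDerivWithinAt hS.ordConnected
    (fun u hu θ => hasDerivWithinAt_derivWithin_fst (hp.differentiableOn two_ne_zero) hu)
    (contDiffOn_uncurry_derivWithin_fst hU (n := 1) hp).continuousOn
    (fun t ht => (contDiff_apply_of_contDiffOn_uncurry hp ht).continuous.intervalIntegrable _ _)
    fun u hu => ?_
  simp_rw [hpde u hu]
  exact integral_flowVelocity_nonpos (contDiff_apply_of_contDiffOn_uncurry hp hu) (hper u hu)
    (hL u hu)

theorem algArea_eq_of_flow (hL : ∀ t ∈ S, algLen (p t) ≠ 0) :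
    ∀ s ∈ S, ∀ t ∈ S, algArea (p s) = algArea (p t) := by
  have hU : UniqueDiffOn ℝ S := uniqueDiffOn_convex hS hS'
  set q : ℝ → ℝ → ℝ := fun t θ => derivWithin (fun s => p s θ) S t
  have hq : ContDiffOn ℝ 1 (uncurry q) (S ×ˢ univ) := contDiffOn_uncurry_derivWithin_fst hU hp
  have hpt : ∀ t ∈ S, ContDiff ℝ 2 (p t) := fun t ht =>
    contDiff_apply_of_contDiffOn_uncurry hp ht
  have hqper : ∀ t ∈ S, Periodic (q t) (2 * π) := fun t ht θ =>
    derivWithin_congr (fun s hs => hper s hs θ) (hper t ht θ)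
  have hcont : ContinuousOn (uncurry fun t θ =>
      2 * (p t θ * q t θ - deriv (p t) θ * deriv (q t) θ)) (S ×ˢ univ) :=
    continuousOn_const.fun_mul ((hp.continuousOn.fun_mul hq.continuousOn).fun_sub
      ((contDiffOn_uncurry_deriv_snd hU (n := 1) hp).continuousOn.fun_mul
        (contDiffOn_uncurry_deriv_snd hU (n := 0) hq).continuousOn))
  have hconst := integral_eq_of_hasDerivWithinAt hS.ordConnected
    (G := fun t θ => p t θ ^ 2 - deriv (p t) θ ^ 2)
    (W := fun t θ => 2 * (p t θ * q t θ - deriv (p t) θ * deriv (q t) θ))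
    (a := 0) (b := 2 * π)
    (fun u hu θ => ?_) hcont (fun t ht => ?_) (fun u hu => ?_)
  · intro s hs t ht
    have h := hconst s hs t ht
    rw [← two_mul_algArea_eq (hpt s hs) (hper s hs),
      ← two_mul_algArea_eq (hpt t ht) (hper t ht)] at h
    linarith
  · have hut : u ∈ closure (interior S) := by
      rw [hS.closure_interior_eq_closure_of_nonempty_interior hS']
      exact subset_closure hu
    have hpθ := hasDerivWithinAt_derivWithin_fst (hp.differentiableOn two_ne_zero) hu (θ := θ)
    have hp'θ := hasDerivWithinAt_deriv_snd hU hp hu hut (θ := θ)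
    refine ((hpθ.pow 2).sub (hp'θ.pow 2)).congr_deriv ?_
    push_cast
    ring
  · exact (((hpt t ht).continuous.pow 2).sub
      (((hpt t ht).continuous_deriv one_le_two).pow 2)).intervalIntegrable _ _
  · rw [intervalIntegral.integral_const_mul, integral_mul_sub_deriv_mul_deriv_eq (hpt u hu)
      (hper u hu) (contDiff_apply_of_contDiffOn_uncurry hq hu) (hqper u hu),
      show q u = flowVelocity (p u) from funext (hpde u hu),
      integral_flowVelocity_mul_betaF (hpt u hu) (hper u hu) (hL u hu), mul_zero]

end Flow

theorem convex_timeDom (T : ℝ≥0∞) : Convex ℝ (timeDom T) :=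
  (convex_Ici 0).inter (Set.OrdConnected.preimage_ennreal_ofReal ordConnected_Iio).convex

theorem interior_timeDom_nonempty {T : ℝ≥0∞} (hT : 0 < T) :
    (interior (timeDom T)).Nonempty := by
  obtain ⟨r, -, h0r, hrT⟩ := ENNReal.lt_iff_exists_real_btwn.1 hT
  have hr : 0 < r := ENNReal.ofReal_pos.1 h0r
  refine ⟨r / 2, interior_maximal (t := Ioo 0 r) (fun t ht => ?_) isOpen_Ioo
    ⟨half_pos hr, half_lt_self hr⟩⟩
  exact ⟨ht.1.le, (ENNReal.ofReal_le_ofReal ht.2.le).trans_lt hrT⟩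

theorem area_const_length_decreasing
    (T : ℝ≥0∞) (hT : 0 < T) (p : ℝ → ℝ → ℝ)
    (hp : ContDiffOn ℝ (⊤ : ℕ∞) (Function.uncurry p) (timeDom T ×ˢ (Set.univ : Set ℝ)))
    (hper : ∀ t ∈ timeDom T, Function.Periodic (p t) (2 * π))
    (hL : ∀ t ∈ timeDom T, 0 < algLen (p t))
    (hpde : ∀ t ∈ timeDom T, ∀ θ : ℝ,
      derivWithin (fun s => p s θ) (timeDom T) t
        = iteratedDeriv 2 (p t) θ + p t θ
          - (1 / algLen (p t)) * ∫ x in (0:ℝ)..(2 * π), (betaF (p t) x) ^ 2) :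
    (∀ s ∈ timeDom T, ∀ t ∈ timeDom T, algArea (p s) = algArea (p t)) ∧
    (∀ s ∈ timeDom T, ∀ t ∈ timeDom T, s ≤ t → algLen (p t) ≤ algLen (p s)) := by
  have hp₂ : ContDiffOn ℝ 2 (uncurry p) (timeDom T ×ˢ univ) :=
    hp.of_le (WithTop.coe_le_coe.2 le_top)
  have hS := convex_timeDom T
  have hS' := interior_timeDom_nonempty hT
  exact ⟨algArea_eq_of_flow hS hS' hp₂ hper hpde fun t ht => (hL t ht).ne',
    fun s hs t ht hst => antitoneOn_algLen_of_flow hS hS' hp₂ hper hpde hL hs ht hst⟩
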